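/- The fundamental network commutes with the semigroup representation: Γ_f ∘ A_{σⱼ} = A_{σⱼ} ∘ Γ_f for every j and every function f : V^n → V. -/

import Mathlib

/-- The map A_{σⱼ} : V^n → V^n, A_{σⱼ}(X)ₖ = X_{σ̃ₖ(j)}. -/
def AM {n : ℕ} {V : Type*} (σt : Fin n → Fin n → Fin n) (j : Fin n)
    (X : Fin n → V) : Fin n → V := fun k => X (σt k j)

/-- The fundamental network map Γ_f : V^n → V^n. -/
def fnet {n : ℕ} {V : Type*} (σt : Fin n → Fin n → Fin n)
    (f : (Fin n → V) → V) (X : Fin n → V) : Fin n → V :=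
  fun j => f (AM σt j X)

/-!
Since `σ` is injective and turns `σt` into composition, `σt` is associative. Associativity says
exactly that `A_{σₖ} ∘ A_{σⱼ} = A_{σₖ ∘ σⱼ}`, and then both sides of the claim, evaluated at `X`
and `k`, equal `f (A_{σₖ ∘ σⱼ} X)`.
-/

theorem assoc_of_injective_of_map_eq_comp {ι α : Type*} {σ : ι → α → α}
    (hinj : Function.Injective σ) {σt : ι → ι → ι} (hσt : ∀ j k, σ (σt j k) = σ j ∘ σ k)
    (a b c : ι) : σt (σt a b) c = σt a (σt b c) :=
  hinj <| by simp only [hσt, Function.comp_assoc]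

section Network

variable {n : ℕ} {V : Type*} {σt : Fin n → Fin n → Fin n}

theorem AM_AM (hassoc : ∀ a b c, σt (σt a b) c = σt a (σt b c)) (k j : Fin n)
    (X : Fin n → V) : AM σt k (AM σt j X) = AM σt (σt k j) X := by
  funext m
  simp only [AM, hassoc]

theorem fnet_comp_AM (hassoc : ∀ a b c, σt (σt a b) c = σt a (σt b c))
    (f : (Fin n → V) → V) (j : Fin n) : fnet σt f ∘ AM σt j = AM σt j ∘ fnet σt f := by
  funext X k
  simp only [Function.comp_apply, fnet, AM_AM hassoc]
  rfl

end Network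

/-- Γ_f ∘ A_{σⱼ} = A_{σⱼ} ∘ Γ_f for every j and every f. -/
theorem stmt15 {N n : ℕ} {V : Type*} (σ : Fin n → Fin N → Fin N)
    (hinj : Function.Injective σ)
    (σt : Fin n → Fin n → Fin n)
    (hσt : ∀ j k : Fin n, σ (σt j k) = σ j ∘ σ k)
    (f : (Fin n → V) → V) :
    ∀ j : Fin n, (fnet σt f) ∘ (AM σt j) = (AM σt j) ∘ (fnet σt f) :=
  fnet_comp_AM (assoc_of_injective_of_map_eq_comp hinj hσt) f
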